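/- For all n ≥ 0, a_7(7n+3) ≡ 0 (mod 7), where a_7(n) is defined by ∑_{n≥0} a_7(n) q^n = (q^2;q^2)_∞^6/(q;q)_∞^7. -/

import Mathlib

/-!
Modulo 7 we have `(q;q)_∞^7 ≡ (q^7;q^7)_∞`, so the generating function gives
`(q^7;q^7)_∞ · ∑ a(n) qⁿ ≡ (q²;q²)_∞^6`. By Jacobi's identity
`(q;q)_∞^3 = ∑_{k ≥ 0} (-1)^k (2k+1) q^{k(k+1)/2}`, the coefficient of `q^m` in `(q²;q²)_∞^6`
is a sum of terms `±(2j+1)(2k+1)` with `j(j+1) + k(k+1) = m`. For `m ≡ 3 (mod 7)` this means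
`(2j+1)² + (2k+1)² ≡ 0 (mod 7)`, and as `-1` is not a square mod 7, `7 ∣ (2j+1)(2k+1)`.
Since `(q^7;q^7)_∞` is a series in `q^7` with constant term 1, induction on `n` gives
`7 ∣ a(7n+3)`.

Jacobi's identity is needed only modulo `q^(M+1)`. It comes from the finite identity
`∑_{|k| ≤ n} (-1)^k (2k+1) [2n, n+k]_q q^{k(k+1)/2} = 2 (q;q)_n (q;q)_{n-1}`, which follows by
induction from a three-term recurrence for Gaussian binomials, together with
`[2n, n+k]_q ≡ [2n, n]_q` and `(q;q)_n² [2n, n]_q = (q;q)_{2n}`.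
-/

/-- Truncated product `∏_{j=1}^{N} (1 - q^{k j})`, approximating `(q^k;q^k)_∞`. -/
noncomputable def etaTrunc (k N : ℕ) : PowerSeries ℤ :=
  ∏ j ∈ Finset.range N, (1 - (PowerSeries.X : PowerSeries ℤ) ^ (k * (j + 1)))

/-- `a` has generating function `(q^2;q^2)_∞^{r-1}/(q;q)_∞^r`, expressed via
coefficientwise agreement with truncated products. -/
def IsGF (r : ℕ) (a : ℕ → ℤ) : Prop :=
  ∀ N n : ℕ, n ≤ N →
    PowerSeries.coeff n (etaTrunc 1 N ^ r * PowerSeries.mk a) =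
    PowerSeries.coeff n (etaTrunc 2 N ^ (r - 1))

open Polynomial Finset

noncomputable def qPoch (n : ℕ) : ℤ[X] :=
  ∏ j ∈ range n, (1 - X ^ (j + 1))

@[simp] lemma qPoch_zero : qPoch 0 = 1 := by simp [qPoch]

lemma qPoch_succ (n : ℕ) : qPoch (n + 1) = qPoch n * (1 - X ^ (n + 1)) :=
  prod_range_succ _ _

@[simp] lemma coeff_qPoch_zero (n : ℕ) : (qPoch n).coeff 0 = 1 := by
  simp [qPoch, coeff_zero_eq_eval_zero, eval_prod]

lemma qPoch_ne_zero (n : ℕ) : qPoch n ≠ 0 := fun h => by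
  simpa [h] using coeff_qPoch_zero n

lemma X_pow_dvd_qPoch_sub {M a b : ℕ} (hMa : M ≤ a) (hab : a ≤ b) :
    (X : ℤ[X]) ^ (M + 1) ∣ qPoch b - qPoch a := by
  induction b, hab using Nat.le_induction with
  | base => simp
  | succ b hab ih =>
    have : qPoch (b + 1) - qPoch a = (qPoch b - qPoch a) - X ^ (b + 1) * qPoch b := by
      rw [qPoch_succ]; ring
    rw [this]
    exact dvd_sub ih ((pow_dvd_pow X (by omega)).mul_right _)

noncomputable def gaussBinom : ℕ → ℕ → ℤ[X]
  | _, 0 => 1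
  | 0, _ + 1 => 0
  | a + 1, b + 1 => gaussBinom a b + X ^ (b + 1) * gaussBinom a (b + 1)

@[simp] lemma gaussBinom_zero_right (a : ℕ) : gaussBinom a 0 = 1 := by cases a <;> rfl

lemma gaussBinom_succ_succ (a b : ℕ) :
    gaussBinom (a + 1) (b + 1) = gaussBinom a b + X ^ (b + 1) * gaussBinom a (b + 1) := rfl

lemma gaussBinom_eq_zero_of_lt {a b : ℕ} (h : a < b) : gaussBinom a b = 0 := by
  induction a generalizing b with
  | zero => obtain ⟨b, rfl⟩ := Nat.exists_eq_add_one.mpr h; rfl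
  | succ a ih =>
    obtain ⟨b, rfl⟩ := Nat.exists_eq_add_one.mpr (by omega : 0 < b)
    rw [gaussBinom_succ_succ, ih (by omega), ih (by omega), mul_zero, add_zero]

@[simp] lemma gaussBinom_self (a : ℕ) : gaussBinom a a = 1 := by
  induction a with
  | zero => rfl
  | succ a ih => rw [gaussBinom_succ_succ, ih, gaussBinom_eq_zero_of_lt (by omega), mul_zero,
      add_zero]

lemma qPoch_mul_qPoch_mul_gaussBinom {a b : ℕ} (h : b ≤ a) :
    qPoch b * qPoch (a - b) * gaussBinom a b = qPoch a := by
  induction a generalizing b with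
  | zero =>
    obtain rfl : b = 0 := by omega
    simp
  | succ a ih =>
    rcases b with _ | b
    · simp
    rcases (show b ≤ a by omega).eq_or_lt with rfl | hba
    · simp
    have hab : a - b = a - (b + 1) + 1 := by omega
    have ih₁ := ih (b := b) (by omega)
    have ih₂ := ih (b := b + 1) (by omega)
    rw [hab, qPoch_succ] at ih₁
    rw [qPoch_succ] at ih₂
    rw [gaussBinom_succ_succ, show a + 1 - (b + 1) = a - (b + 1) + 1 by omega,
      qPoch_succ (a - (b + 1)), qPoch_succ b, qPoch_succ a]
    have hX : (X : ℤ[X]) ^ (b + 1) * X ^ (a - (b + 1) + 1) = X ^ (a + 1) := by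
      rw [← pow_add]; congr 1; omega
    linear_combination (1 - X ^ (b + 1)) * ih₁
      + X ^ (b + 1) * (1 - X ^ (a - (b + 1) + 1)) * ih₂ - qPoch a * hX

lemma one_sub_X_pow_mul_gaussBinom {a b : ℕ} (h : b < a) :
    (1 - X ^ (a - b)) * gaussBinom a b = (1 - X ^ (b + 1)) * gaussBinom a (b + 1) := by
  refine mul_left_cancel₀ (mul_ne_zero (qPoch_ne_zero b) (qPoch_ne_zero (a - (b + 1)))) ?_
  have e₁ : qPoch (a - (b + 1)) * (1 - X ^ (a - b)) = qPoch (a - b) := by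
    rw [show a - b = a - (b + 1) + 1 by omega, qPoch_succ]
  calc qPoch b * qPoch (a - (b + 1)) * ((1 - X ^ (a - b)) * gaussBinom a b)
      = qPoch b * (qPoch (a - (b + 1)) * (1 - X ^ (a - b))) * gaussBinom a b := by ring
    _ = qPoch (b + 1) * qPoch (a - (b + 1)) * gaussBinom a (b + 1) := by
      rw [e₁, qPoch_mul_qPoch_mul_gaussBinom h.le, qPoch_mul_qPoch_mul_gaussBinom h]
    _ = _ := by rw [qPoch_succ]; ring

lemma gaussBinom_succ_succ' {a b : ℕ} (h : b ≤ a) :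
    gaussBinom (a + 1) (b + 1) = X ^ (a - b) * gaussBinom a b + gaussBinom a (b + 1) := by
  rcases h.eq_or_lt with rfl | h
  · simp [gaussBinom_eq_zero_of_lt (Nat.lt_succ_self b)]
  · rw [gaussBinom_succ_succ]
    linear_combination one_sub_X_pow_mul_gaussBinom h

lemma X_pow_dvd_gaussBinom_succ_sub {a b L : ℕ} (h : b < a) (hb : L ≤ b + 1)
    (ha : L ≤ a - b) :
    (X : ℤ[X]) ^ L ∣ gaussBinom a (b + 1) - gaussBinom a b := by
  have : gaussBinom a (b + 1) - gaussBinom a b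
      = X ^ (b + 1) * gaussBinom a (b + 1) - X ^ (a - b) * gaussBinom a b := by
    linear_combination -one_sub_X_pow_mul_gaussBinom h
  rw [this]
  exact dvd_sub ((pow_dvd_pow X hb).mul_right _) ((pow_dvd_pow X ha).mul_right _)

lemma X_pow_dvd_gaussBinom_sub {a b c L : ℕ} (hbc : b ≤ c) (hca : c ≤ a) (hb : L ≤ b + 1)
    (hc : L ≤ a - c + 1) :
    (X : ℤ[X]) ^ L ∣ gaussBinom a c - gaussBinom a b := by
  induction c, hbc using Nat.le_induction with
  | base => simp
  | succ c hbc ih =>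
    rw [← sub_add_sub_cancel _ (gaussBinom a c)]
    exact dvd_add (X_pow_dvd_gaussBinom_succ_sub (by omega) (by omega) (by omega))
      (ih (by omega) (by omega))

noncomputable def gaussBinomZ (a : ℕ) (m : ℤ) : ℤ[X] :=
  if 0 ≤ m then gaussBinom a m.toNat else 0

lemma gaussBinomZ_of_nonneg {m : ℤ} (h : 0 ≤ m) (a : ℕ) :
    gaussBinomZ a m = gaussBinom a m.toNat :=
  if_pos h

lemma gaussBinomZ_of_neg {m : ℤ} (h : m < 0) (a : ℕ) : gaussBinomZ a m = 0 :=
  if_neg (by omega)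

lemma gaussBinomZ_of_lt {a : ℕ} {m : ℤ} (h : (a : ℤ) < m) : gaussBinomZ a m = 0 := by
  rw [gaussBinomZ_of_nonneg (by omega), gaussBinom_eq_zero_of_lt (by omega)]

lemma gaussBinomZ_eq_zero_of_not_mem {a : ℕ} {m : ℤ} (h : m ∉ Icc 0 (a : ℤ)) :
    gaussBinomZ a m = 0 := by
  rw [mem_Icc, not_and_or, not_le, not_le] at h
  exact h.elim (gaussBinomZ_of_neg · a) gaussBinomZ_of_lt

lemma gaussBinomZ_succ (a : ℕ) (m : ℤ) :
    gaussBinomZ (a + 1) m = gaussBinomZ a (m - 1) + X ^ m.toNat * gaussBinomZ a m := by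
  rcases lt_trichotomy m 0 with h | rfl | h
  · simp [gaussBinomZ_of_neg h, gaussBinomZ_of_neg (by omega : m - 1 < 0)]
  · simp [gaussBinomZ_of_neg (by omega : (-1 : ℤ) < 0), gaussBinomZ_of_nonneg le_rfl]
  · obtain ⟨b, rfl⟩ : ∃ b : ℕ, m = b + 1 := ⟨m.toNat - 1, by omega⟩
    rw [gaussBinomZ_of_nonneg h.le, gaussBinomZ_of_nonneg (by omega),
      gaussBinomZ_of_nonneg h.le, show ((b : ℤ) + 1).toNat = b + 1 by omega,
      show ((b : ℤ) + 1 - 1).toNat = b by omega, gaussBinom_succ_succ]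

lemma gaussBinomZ_succ' (a : ℕ) (m : ℤ) :
    gaussBinomZ (a + 1) m
      = X ^ ((a + 1 : ℤ) - m).toNat * gaussBinomZ a (m - 1) + gaussBinomZ a m := by
  rcases lt_trichotomy m 0 with h | rfl | h
  · simp [gaussBinomZ_of_neg h, gaussBinomZ_of_neg (by omega : m - 1 < 0)]
  · simp [gaussBinomZ_of_neg (by omega : (-1 : ℤ) < 0), gaussBinomZ_of_nonneg le_rfl]
  rcases lt_or_ge (a : ℤ) (m - 1) with h' | h'
  · simp [gaussBinomZ_of_lt h', gaussBinomZ_of_lt (by omega : (a : ℤ) < m),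
      gaussBinomZ_of_lt (by push_cast; omega : ((a + 1 : ℕ) : ℤ) < m)]
  obtain ⟨b, rfl⟩ : ∃ b : ℕ, m = b + 1 := ⟨m.toNat - 1, by omega⟩
  rw [gaussBinomZ_of_nonneg h.le, gaussBinomZ_of_nonneg (by omega),
    gaussBinomZ_of_nonneg h.le, show ((b : ℤ) + 1).toNat = b + 1 by omega,
    show ((b : ℤ) + 1 - 1).toNat = b by omega, gaussBinom_succ_succ' (by omega),
    show ((a + 1 : ℤ) - (b + 1)).toNat = a - b by omega]

lemma X_pow_mul_gaussBinomZ_congr {a : ℕ} {m : ℤ} {e₁ e₂ : ℕ}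
    (h : 0 ≤ m → m ≤ a → e₁ = e₂) :
    (X : ℤ[X]) ^ e₁ * gaussBinomZ a m = X ^ e₂ * gaussBinomZ a m := by
  by_cases hm : m ∈ Icc 0 (a : ℤ)
  · rw [mem_Icc] at hm
    rw [h hm.1 hm.2]
  · rw [gaussBinomZ_eq_zero_of_not_mem hm, mul_zero, mul_zero]

def triangle (k : ℤ) : ℕ := (k * (k + 1) / 2).toNat

lemma two_mul_triangle (k : ℤ) : 2 * (triangle k : ℤ) = k * (k + 1) := by
  have h₂ : (2 : ℤ) ∣ k * (k + 1) := (Int.even_mul_succ_self k).two_dvd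
  have h₀ : 0 ≤ k * (k + 1) := by
    rcases le_or_gt 0 k with h | h
    · positivity
    · nlinarith
  rw [triangle, Int.toNat_of_nonneg (Int.ediv_nonneg h₀ (by norm_num)), Int.mul_ediv_cancel' h₂]

lemma triangle_add_one (k : ℤ) : (triangle (k + 1) : ℤ) = triangle k + (k + 1) := by
  linarith [two_mul_triangle k, two_mul_triangle (k + 1)]

lemma triangle_neg_one_sub (k : ℤ) : triangle (-1 - k) = triangle k := by
  unfold triangle; ring_nf

lemma natAbs_le_triangle_add_one (k : ℤ) : (k.natAbs : ℤ) ≤ triangle k + 1 := by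
  have h := two_mul_triangle k
  rcases le_or_gt 0 k with hk | hk
  · rw [Int.natAbs_of_nonneg hk]; nlinarith
  · rw [Int.ofNat_natAbs_of_nonpos hk.le]; nlinarith

lemma le_triangle {k : ℤ} (hk : 0 ≤ k) : k ≤ triangle k := by
  nlinarith [two_mul_triangle k]

lemma gaussBinomZ_mul_X_pow_triangle (n : ℕ) (k : ℤ) :
    gaussBinomZ (2 * n + 2) (n + 1 + k) * X ^ triangle k
      = X ^ n * (gaussBinomZ (2 * n) (n + (k + 1)) * X ^ triangle (k + 1))
        + (1 + X ^ (2 * n + 1)) * (gaussBinomZ (2 * n) (n + k) * X ^ triangle k)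
        + X ^ (n + 1) * (gaussBinomZ (2 * n) (n + (k - 1)) * X ^ triangle (k - 1)) := by
  have t₁ := triangle_add_one k
  have t₂ := triangle_add_one (k - 1)
  rw [sub_add_cancel] at t₂
  rw [gaussBinomZ_succ', gaussBinomZ_succ, gaussBinomZ_succ]
  push_cast
  rw [show 2 * (n : ℤ) + 1 + 1 - (n + 1 + k) = n + 1 - k by ring,
    show (n : ℤ) + 1 + k - 1 = n + k by ring, show (n : ℤ) + k - 1 = n + (k - 1) by ring,
    show (n : ℤ) + 1 + k = n + (k + 1) by ring]
  have h₁ : (X : ℤ[X]) ^ (((n : ℤ) + (k + 1)).toNat + triangle k)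
        * gaussBinomZ (2 * n) (n + (k + 1))
      = X ^ (n + triangle (k + 1)) * gaussBinomZ (2 * n) (n + (k + 1)) :=
    X_pow_mul_gaussBinomZ_congr fun _ _ => by omega
  have h₂ : (X : ℤ[X]) ^ (((n : ℤ) + 1 - k).toNat + (((n : ℤ) + k).toNat + triangle k))
        * gaussBinomZ (2 * n) (n + k)
      = X ^ (2 * n + 1 + triangle k) * gaussBinomZ (2 * n) (n + k) :=
    X_pow_mul_gaussBinomZ_congr fun _ _ => by push_cast at *; omega
  have h₃ : (X : ℤ[X]) ^ (((n : ℤ) + 1 - k).toNat + triangle k)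
        * gaussBinomZ (2 * n) (n + (k - 1))
      = X ^ (n + 1 + triangle (k - 1)) * gaussBinomZ (2 * n) (n + (k - 1)) :=
    X_pow_mul_gaussBinomZ_congr fun _ _ => by push_cast at *; omega
  linear_combination (norm := ring_nf) h₁ + h₂ + h₃

noncomputable def gaussBinomTerm (n : ℕ) (f : ℤ → ℤ) (k : ℤ) : ℤ[X] :=
  C (f k) * (gaussBinomZ (2 * n) (n + k) * X ^ triangle k)

noncomputable def gaussBinomSum (n : ℕ) (f : ℤ → ℤ) : ℤ[X] :=
  ∑ k ∈ Icc (-(n : ℤ)) n, gaussBinomTerm n f k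

lemma sum_gaussBinomTerm_of_subset {n : ℕ} (f : ℤ → ℤ) {s : Finset ℤ}
    (hs : Icc (-(n : ℤ)) n ⊆ s) :
    ∑ k ∈ s, gaussBinomTerm n f k = gaussBinomSum n f := by
  refine (sum_subset hs fun k _ hk => ?_).symm
  rw [gaussBinomTerm, gaussBinomZ_eq_zero_of_not_mem, zero_mul, mul_zero]
  simp only [mem_Icc] at hk ⊢
  push_cast
  omega

lemma gaussBinomTerm_succ (n : ℕ) (f : ℤ → ℤ) (k : ℤ) :
    gaussBinomTerm (n + 1) f k = X ^ n * gaussBinomTerm n (fun j => f (j - 1)) (k + 1)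
      + (1 + X ^ (2 * n + 1)) * gaussBinomTerm n f k
      + X ^ (n + 1) * gaussBinomTerm n (fun j => f (j + 1)) (k + -1) := by
  simp only [gaussBinomTerm, add_sub_cancel_right, ← sub_eq_add_neg]
  rw [show 2 * (n + 1) = 2 * n + 2 by ring, Nat.cast_succ, gaussBinomZ_mul_X_pow_triangle,
    sub_add_cancel]
  ring

lemma sum_Icc_add_right {α M : Type*} [AddCommMonoid α] [PartialOrder α]
    [IsOrderedCancelAddMonoid α] [ExistsAddOfLE α] [LocallyFiniteOrder α] [AddCommMonoid M]
    (g : α → M) (a b c : α) :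
    ∑ k ∈ Icc a b, g (k + c) = ∑ k ∈ Icc (a + c) (b + c), g k := by
  rw [← map_add_right_Icc, sum_map]
  rfl

lemma gaussBinomSum_succ (n : ℕ) (f : ℤ → ℤ) :
    gaussBinomSum (n + 1) f = X ^ n * gaussBinomSum n (fun j => f (j - 1))
      + (1 + X ^ (2 * n + 1)) * gaussBinomSum n f
      + X ^ (n + 1) * gaussBinomSum n (fun j => f (j + 1)) := by
  rw [gaussBinomSum]
  simp only [gaussBinomTerm_succ, sum_add_distrib, ← mul_sum]
  rw [sum_Icc_add_right (gaussBinomTerm n _), sum_Icc_add_right (gaussBinomTerm n _),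
    sum_gaussBinomTerm_of_subset, sum_gaussBinomTerm_of_subset, sum_gaussBinomTerm_of_subset] <;>
  exact Icc_subset_Icc (by push_cast; omega) (by push_cast; omega)

lemma gaussBinomSum_zero (f : ℤ → ℤ) : gaussBinomSum 0 f = C (f 0) := by
  simp [gaussBinomSum, gaussBinomTerm, gaussBinomZ_of_nonneg le_rfl, triangle]

lemma gaussBinomSum_eq_add {n : ℕ} {f g h : ℤ → ℤ} (c d : ℤ)
    (hf : ∀ k, f k = c * g k + d * h k) :
    gaussBinomSum n f = C c * gaussBinomSum n g + C d * gaussBinomSum n h := by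
  simp only [gaussBinomSum, mul_sum, ← sum_add_distrib, gaussBinomTerm, hf, map_add, map_mul]
  exact sum_congr rfl fun _ _ => by ring

lemma gaussBinomSum_negOnePow_succ (n : ℕ) :
    gaussBinomSum (n + 1) (fun k => k.negOnePow)
      = (1 - X ^ n) * (1 - X ^ (n + 1)) * gaussBinomSum n (fun k => k.negOnePow) := by
  rw [gaussBinomSum_succ, gaussBinomSum_eq_add (-1) 0 (g := fun k => k.negOnePow) (h := 0)
      fun k => by simp [Int.negOnePow_sub],
    gaussBinomSum_eq_add (f := fun k => ((k + 1).negOnePow : ℤ)) (-1) 0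
      (g := fun k => k.negOnePow) (h := 0) fun k => by simp [Int.negOnePow_succ]]
  simp only [map_neg, map_one, map_zero]
  ring

def jacobiCoeff (k : ℤ) : ℤ := k.negOnePow * (2 * k + 1)

lemma gaussBinomSum_jacobiCoeff_succ (n : ℕ) :
    gaussBinomSum (n + 1) jacobiCoeff
      = (1 - X ^ n) * (1 - X ^ (n + 1)) * gaussBinomSum n jacobiCoeff
        + 2 * (X ^ n - X ^ (n + 1)) * gaussBinomSum n (fun k => k.negOnePow) := by
  rw [gaussBinomSum_succ, gaussBinomSum_eq_add (-1) 2 (g := jacobiCoeff)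
      (h := fun k => k.negOnePow) fun k => by simp [jacobiCoeff, Int.negOnePow_sub]; ring,
    gaussBinomSum_eq_add (f := fun k => jacobiCoeff (k + 1)) (-1) (-2) (g := jacobiCoeff)
      (h := fun k => k.negOnePow) fun k => by simp [jacobiCoeff, Int.negOnePow_succ]; ring]
  simp only [map_neg, map_one, map_ofNat]
  ring

lemma gaussBinomSum_succ_negOnePow_eq_zero (n : ℕ) :
    gaussBinomSum (n + 1) (fun k => k.negOnePow) = 0 := by
  induction n with
  | zero => simp [gaussBinomSum_negOnePow_succ]
  | succ n ih => rw [gaussBinomSum_negOnePow_succ, ih, mul_zero]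

lemma gaussBinomSum_succ_jacobiCoeff_eq (n : ℕ) :
    gaussBinomSum (n + 1) jacobiCoeff = 2 * qPoch (n + 1) * qPoch n := by
  induction n with
  | zero => simp [gaussBinomSum_jacobiCoeff_succ, gaussBinomSum_zero, jacobiCoeff, qPoch_succ]
  | succ n ih =>
    rw [gaussBinomSum_jacobiCoeff_succ, ih, gaussBinomSum_succ_negOnePow_eq_zero,
      qPoch_succ (n + 1)]
    linear_combination (-2 * (1 - X ^ (n + 1 + 1)) * qPoch (n + 1)) * qPoch_succ n

noncomputable def jacobiCubeSum (M : ℕ) : ℤ[X] :=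
  ∑ k ∈ Icc (0 : ℤ) M, C (jacobiCoeff k) * X ^ triangle k

lemma X_pow_dvd_jacobiCubeSum_sub {M a b : ℕ} (hMa : M ≤ a) (hab : a ≤ b) :
    (X : ℤ[X]) ^ (M + 1) ∣ jacobiCubeSum b - jacobiCubeSum a := by
  rw [jacobiCubeSum, jacobiCubeSum,
    ← sum_sdiff (Icc_subset_Icc_right (by omega : (a : ℤ) ≤ b)), add_sub_cancel_right]
  refine dvd_sum fun k hk => (pow_dvd_pow X ?_).mul_left _
  simp only [mem_sdiff, mem_Icc, not_and, not_le] at hk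
  have := le_triangle hk.1.1
  omega

lemma jacobiCoeff_neg_one_sub (k : ℤ) : jacobiCoeff (-1 - k) = jacobiCoeff k := by
  rw [jacobiCoeff, jacobiCoeff, show -1 - k = -(k + 1) by ring, Int.negOnePow_neg,
    Int.negOnePow_succ]
  push_cast
  ring

lemma sum_Icc_jacobiCoeff_eq_jacobiCubeSum_add (n : ℕ) :
    ∑ k ∈ Icc (-((n : ℤ) + 1)) (n + 1), C (jacobiCoeff k) * X ^ triangle k
      = jacobiCubeSum n + jacobiCubeSum (n + 1) := by
  have hsplit : Icc (-((n : ℤ) + 1)) (n + 1) = Icc (-((n : ℤ) + 1)) (-1) ∪ Icc 0 (n + 1) := by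
    ext k; simp only [mem_union, mem_Icc]; omega
  have hneg : ∑ k ∈ Icc (-((n : ℤ) + 1)) (-1), C (jacobiCoeff k) * X ^ triangle k
      = jacobiCubeSum n := by
    refine sum_nbij' (fun k => -1 - k) (fun k => -1 - k) ?_ ?_ (fun _ _ => by ring)
      (fun _ _ => by ring) fun k _ => by rw [jacobiCoeff_neg_one_sub, triangle_neg_one_sub]
    all_goals intro k hk; simp only [mem_Icc] at hk ⊢; omega
  rw [hsplit, sum_union (disjoint_left.mpr fun k hk hk' => by
    simp only [mem_Icc] at hk hk'; omega), hneg, jacobiCubeSum]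
  rfl

lemma X_pow_dvd_gaussBinomSum_sub {M n : ℕ} (hn : 2 * M + 1 ≤ n) (f : ℤ → ℤ) :
    (X : ℤ[X]) ^ (M + 1) ∣
      gaussBinomSum n f
        - gaussBinom (2 * n) n * ∑ k ∈ Icc (-(n : ℤ)) n, C (f k) * X ^ triangle k := by
  rw [gaussBinomSum, mul_sum, ← sum_sub_distrib]
  refine dvd_sum fun k hk => ?_
  rw [mem_Icc] at hk
  have hterm : gaussBinomTerm n f k - gaussBinom (2 * n) n * (C (f k) * X ^ triangle k)
      = C (f k) * X ^ triangle k * (gaussBinom (2 * n) (n + k).toNat - gaussBinom (2 * n) n) := by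
    rw [gaussBinomTerm, gaussBinomZ_of_nonneg (by omega)]
    ring
  rw [hterm]
  -- `[2n, n + k] ≡ [2n, n]` for `|k| ≤ M + 1`; for larger `|k|` already `X ^ triangle k ≡ 0`
  rcases le_or_gt k.natAbs (M + 1) with hk' | hk'
  · refine dvd_mul_of_dvd_right ?_ _
    rcases le_or_gt 0 k with hk₀ | hk₀
    · exact X_pow_dvd_gaussBinom_sub (by omega) (by omega) (by omega) (by omega)
    · rw [← neg_sub, dvd_neg]
      exact X_pow_dvd_gaussBinom_sub (by omega) (by omega) (by omega) (by omega)
  · have := natAbs_le_triangle_add_one k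
    exact ((pow_dvd_pow X (by omega)).mul_left _).mul_right _

theorem X_pow_dvd_qPoch_pow_three_sub_jacobiCubeSum (M : ℕ) :
    (X : ℤ[X]) ^ (M + 1) ∣ qPoch M ^ 3 - jacobiCubeSum M := by
  set n := 2 * M + 1
  let π := Ideal.Quotient.mk (Ideal.span {(X : ℤ[X]) ^ (M + 1)})
  have hπ : ∀ {f g : ℤ[X]}, X ^ (M + 1) ∣ f - g → π f = π g := fun h =>
    Ideal.Quotient.eq.mpr (Ideal.mem_span_singleton.mpr h)
  have hP : ∀ {b}, M ≤ b → π (qPoch b) = π (qPoch M) := fun h =>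
    hπ (X_pow_dvd_qPoch_sub le_rfl h)
  have hθ : ∀ {b}, M ≤ b → π (jacobiCubeSum b) = π (jacobiCubeSum M) := fun h =>
    hπ (X_pow_dvd_jacobiCubeSum_sub le_rfl h)
  have hsum : π (gaussBinomSum (n + 1) jacobiCoeff)
      = π (gaussBinom (2 * (n + 1)) (n + 1))
        * (π (jacobiCubeSum n) + π (jacobiCubeSum (n + 1))) := by
    rw [← map_add, ← map_mul, ← sum_Icc_jacobiCoeff_eq_jacobiCubeSum_add]
    exact_mod_cast hπ (X_pow_dvd_gaussBinomSum_sub (by omega) jacobiCoeff)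
  have hbinom :=
    congrArg π (qPoch_mul_qPoch_mul_gaussBinom (a := 2 * (n + 1)) (b := n + 1) (by omega))
  rw [show 2 * (n + 1) - (n + 1) = n + 1 by omega] at hbinom
  rw [gaussBinomSum_succ_jacobiCoeff_eq, hθ (b := n) (by omega), hθ (b := n + 1) (by omega)]
    at hsum
  simp only [map_mul, map_ofNat] at hsum hbinom
  rw [hP (b := n) (by omega), hP (b := n + 1) (by omega)] at hsum
  rw [hP (b := n + 1) (by omega), hP (b := 2 * (n + 1)) (by omega)] at hbinom
  -- with `P = qPoch M`, `B = [2n + 2, n + 1]`: `2P² ≡ 2Bθ` and `P²B ≡ P`, hence `2P⁴ ≡ 2Pθ`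
  have hzero : π (2 * qPoch M * (qPoch M ^ 3 - jacobiCubeSum M)) = 0 := by
    simp only [map_mul, map_sub, map_pow, map_ofNat]
    linear_combination π (qPoch M) ^ 2 * hsum + 2 * π (jacobiCubeSum M) * hbinom
  have hdvd := Ideal.mem_span_singleton.mp (Ideal.Quotient.eq_zero_iff_mem.mp hzero)
  exact prime_X.pow_dvd_of_dvd_mul_left _ (by simp [X_dvd_iff]) hdvd

lemma etaTrunc_eq_expand_qPoch (k N : ℕ) :
    etaTrunc k N = (expand ℤ k (qPoch N) : PowerSeries ℤ) := by
  rw [etaTrunc, qPoch, map_prod, ← coeToPowerSeries.ringHom_apply, map_prod]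
  simp [coeToPowerSeries.ringHom_apply, ← pow_mul]

lemma seven_dvd_jacobiCoeff_mul_jacobiCoeff {j k : ℤ} {m : ℕ} (hm : m % 7 = 3)
    (h : 2 * triangle j + 2 * triangle k = m) : (7 : ℤ) ∣ jacobiCoeff j * jacobiCoeff k := by
  -- `-1` is not a square modulo 7
  have key : ∀ x y : ZMod 7, x ^ 2 + y ^ 2 = 0 → x * y = 0 := by decide
  have hsq : (7 : ℤ) ∣ (2 * j + 1) ^ 2 + (2 * k + 1) ^ 2 := by
    obtain ⟨t, rfl⟩ : ∃ t, m = 7 * t + 3 := ⟨m / 7, by omega⟩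
    refine ⟨4 * t + 2, ?_⟩
    have h' : 2 * (triangle j : ℤ) + 2 * triangle k = 7 * t + 3 := by exact_mod_cast h
    linear_combination 4 * h' - 4 * two_mul_triangle j - 4 * two_mul_triangle k
  have hprod : (7 : ℤ) ∣ (2 * j + 1) * (2 * k + 1) := by
    have h7 := (ZMod.intCast_zmod_eq_zero_iff_dvd _ 7).mpr hsq
    push_cast at h7
    exact (ZMod.intCast_zmod_eq_zero_iff_dvd _ 7).mp (by push_cast; exact key _ _ h7)
  rw [jacobiCoeff, jacobiCoeff, mul_mul_mul_comm]
  exact hprod.mul_left _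

lemma seven_dvd_coeff_expand_jacobiCubeSum_sq (M : ℕ) {m : ℕ} (hm : m % 7 = 3) :
    (7 : ℤ) ∣ ((expand ℤ 2 (jacobiCubeSum M)) ^ 2).coeff m := by
  rw [sq, jacobiCubeSum, map_sum, sum_mul_sum]
  simp only [finsetSum_coeff]
  refine dvd_sum fun j _ => dvd_sum fun k _ => ?_
  rw [show expand ℤ 2 (C (jacobiCoeff j) * X ^ triangle j)
        * expand ℤ 2 (C (jacobiCoeff k) * X ^ triangle k)
      = C (jacobiCoeff j * jacobiCoeff k) * X ^ (2 * triangle j + 2 * triangle k) by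
    simp only [map_mul, expand_C, map_pow, expand_X, pow_add, pow_mul]; ring, coeff_C_mul_X_pow]
  split_ifs with h
  · exact seven_dvd_jacobiCoeff_mul_jacobiCoeff hm h.symm
  · exact dvd_zero _

lemma seven_dvd_coeff_etaTrunc_two_pow_six {N m : ℕ} (hmN : m ≤ N) (hm : m % 7 = 3) :
    (7 : ℤ) ∣ PowerSeries.coeff m (etaTrunc 2 N ^ 6) := by
  set e := expand ℤ 2 (qPoch N)
  set θ := expand ℤ 2 (jacobiCubeSum N)
  have hcube : (X : ℤ[X]) ^ (2 * (N + 1)) ∣ e ^ 3 - θ := by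
    simpa [e, θ, pow_mul] using
      map_dvd (expand ℤ 2) (X_pow_dvd_qPoch_pow_three_sub_jacobiCubeSum N)
  have hsix : (X : ℤ[X]) ^ (N + 1) ∣ e ^ 6 - θ ^ 2 := by
    rw [show e ^ 6 - θ ^ 2 = (e ^ 3 - θ) * (e ^ 3 + θ) by ring]
    exact ((pow_dvd_pow X (by omega)).trans hcube).mul_right _
  rw [etaTrunc_eq_expand_qPoch, ← Polynomial.coe_pow, Polynomial.coeff_coe,
    ← sub_add_cancel (e ^ 6) (θ ^ 2), coeff_add, X_pow_dvd_iff.mp hsix m (by omega), zero_add]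
  exact seven_dvd_coeff_expand_jacobiCubeSum_sq N hm

lemma map_etaTrunc_one_pow_seven (N : ℕ) :
    PowerSeries.map (Int.castRingHom (ZMod 7)) (etaTrunc 1 N ^ 7)
      = (expand (ZMod 7) 7 ((qPoch N).map (Int.castRingHom (ZMod 7))) :
          PowerSeries (ZMod 7)) := by
  have : Fact (Nat.Prime 7) := ⟨by norm_num⟩
  rw [etaTrunc_eq_expand_qPoch, expand_one, ← Polynomial.coe_pow, ← polynomial_map_coe,
    Polynomial.map_pow, ZMod.expand_card]

lemma coeff_eq_zero_of_coeff_expand_mul_eq_zero {R : Type*} [CommSemiring R] {p r : ℕ}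
    (hp : 0 < p) (hr : r < p) {F : R[X]} (hF : F.coeff 0 = 1) {G : PowerSeries R} {n : ℕ}
    (h : ∀ i ≤ n, PowerSeries.coeff (p * i + r) ((expand R p F : PowerSeries R) * G) = 0) :
    PowerSeries.coeff (p * n + r) G = 0 := by
  induction n using Nat.strong_induction_on with
  | _ n ih =>
  have hn := h n le_rfl
  rw [PowerSeries.coeff_mul, sum_eq_single (0, p * n + r)] at hn
  · simpa [coeff_expand hp, hF] using hn
  · rintro ⟨i, j⟩ hij hne
    rw [HasAntidiagonal.mem_antidiagonal] at hij
    rw [Polynomial.coeff_coe, coeff_expand hp]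
    split_ifs with hpi
    · obtain ⟨s, rfl⟩ := hpi
      have hs : 0 < s := Nat.pos_of_ne_zero fun hs => hne (by simp_all)
      have hsn : s ≤ n := by
        by_contra hsn
        have := Nat.mul_le_mul_left p (show n + 1 ≤ s by omega)
        rw [mul_add, mul_one] at this
        omega
      obtain ⟨t, rfl⟩ := Nat.exists_eq_add_of_le hsn
      rw [mul_add] at hij
      rw [show j = p * t + r by omega, ih t (by omega) fun i hi => h i (by omega), mul_zero]
    · rw [zero_mul]
  · simp

theorem stmt_5 (a : ℕ → ℤ) (ha : IsGF 7 a) :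
    ∀ n : ℕ, (7 : ℤ) ∣ a (7 * n + 3) := by
  intro n
  set φ := Int.castRingHom (ZMod 7)
  set N := 7 * n + 3
  have hrel : ∀ i ≤ n, PowerSeries.coeff (7 * i + 3)
      ((expand (ZMod 7) 7 ((qPoch N).map φ) : PowerSeries (ZMod 7)) * PowerSeries.map φ (.mk a))
        = 0 := by
    intro i hi
    rw [← map_etaTrunc_one_pow_seven, ← map_mul, PowerSeries.coeff_map, ha N _ (by omega)]
    exact (ZMod.intCast_zmod_eq_zero_iff_dvd _ 7).mpr
      (seven_dvd_coeff_etaTrunc_two_pow_six (by omega) (by omega))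
  have hcoeff :=
    coeff_eq_zero_of_coeff_expand_mul_eq_zero (by norm_num) (by norm_num) (by simp) hrel
  rw [PowerSeries.coeff_map, PowerSeries.coeff_mk] at hcoeff
  exact (ZMod.intCast_zmod_eq_zero_iff_dvd _ 7).mp hcoeff
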